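/- Let [X,d,m] be a metric random walk space with an invariant and reversible σ-finite measure ν, let n ≥ 1 (with the convention that n/(n−1) = ∞ and L^{n/(n−1)} = L^∞ when n = 1), and let I_n > 0. Then ν(A)^{(n−1)/n} ≤ I_n · P_m(A) for every ν-measurable A ⊂ X with 0 < ν(A) < ν(X) if and only if ‖u‖_{L^{n/(n−1)}(X,ν)} ≤ I_n · TV_m(u) for every u ∈ BV_m^0(X,ν). -/

import Mathlib

open MeasureTheory ENNReal Filter Set Topology

noncomputable section

variable {X : Type*} [MeasurableSpace X]

/-- The double integral `∫∫ |u(y) − u(x)| dm_x(y) dν(x)`. -/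
def nlEnergy (m : X → Measure X) (ν : Measure X) (u : X → ℝ) : ℝ≥0∞ :=
  ∫⁻ x, ∫⁻ y, ENNReal.ofReal |u y - u x| ∂(m x) ∂ν

/-- The `m`-total variation `TV_m(u) = (1/2) ∫∫ |u(y) − u(x)| dm_x(y) dν(x)`. -/
def TVm (m : X → Measure X) (ν : Measure X) (u : X → ℝ) : ℝ≥0∞ :=
  2⁻¹ * nlEnergy m ν u

/-- `u ∈ BV_m(X,ν)`: a measurable function with finite nonlocal energy. -/
def MemBVm (m : X → Measure X) (ν : Measure X) (u : X → ℝ) : Prop :=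
  Measurable u ∧ nlEnergy m ν u < ⊤

/-- `u ∈ BV_m^0(X,ν)`: `u ∈ BV_m(X,ν)` vanishing a.e. outside a set `A` with `0 < ν A < ν X`. -/
def MemBVm0 (m : X → Measure X) (ν : Measure X) (u : X → ℝ) : Prop :=
  MemBVm m ν u ∧ ∃ A : Set X, MeasurableSet A ∧ 0 < ν A ∧ ν A < ν Set.univ ∧
    ∀ᵐ x ∂ν, x ∉ A → u x = 0

/-- The `m`-interaction `L_m(A,B) = ∫_A m_x(B) dν(x)`. -/
def Lm (m : X → Measure X) (ν : Measure X) (A B : Set X) : ℝ≥0∞ :=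
  ∫⁻ x in A, m x B ∂ν

/-- The `m`-perimeter `P_m(E) = L_m(E, X∖E)`. -/
def Pm (m : X → Measure X) (ν : Measure X) (E : Set X) : ℝ≥0∞ :=
  Lm m ν E Eᶜ

/-- `ν` is invariant and reversible for `m`. -/
def Reversible (m : X → Measure X) (ν : Measure X) : Prop :=
  ∀ F : X → X → ℝ≥0∞, Measurable (Function.uncurry F) →
    ∫⁻ x, ∫⁻ y, F x y ∂(m x) ∂ν = ∫⁻ y, ∫⁻ x, F x y ∂(m y) ∂ν

/-- `x ↦ m_x(A)` is measurable for every Borel set `A`. -/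
def MeasurableKernel (m : X → Measure X) : Prop :=
  ∀ A : Set X, MeasurableSet A → Measurable fun x => m x A

/-- The measure `ν ⊗ m_x` on `X × X`, given by `(ν ⊗ m_x)(U) = ∫ m_x(U_x) dν(x)`. -/
def nuOtimes (m : X → Measure X) (ν : Measure X) : Measure (X × X) :=
  ν.bind fun x => (m x).map (Prod.mk x)

/-- The `m`-divergence `div_m z (x) = (1/2) ∫ (z(x,y) − z(y,x)) dm_x(y)`. -/
def divm (m : X → Measure X) (z : X → X → ℝ) (x : X) : ℝ :=
  2⁻¹ * ∫ y, (z x y - z y x) ∂(m x)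

/-- The multivalued sign function. -/
def signSet (r : ℝ) : Set ℝ :=
  if 0 < r then {1} else if r < 0 then {-1} else Set.Icc (-1) 1

/-- `[X,d,m]` is `m`-connected with respect to `ν`. -/
def MConnected (m : X → Measure X) (ν : Measure X) : Prop :=
  ∀ A B : Set X, MeasurableSet A → MeasurableSet B → 0 < ν A → 0 < ν B →
    A ∪ B = Set.univ → 0 < Lm m ν A B

/-- `ν` is ergodic for `m`. -/
def ErgodicRW (m : X → Measure X) (ν : Measure X) : Prop :=
  ∀ B : Set X, MeasurableSet B → (∀ x ∈ B, m x B = 1) → ν B = 0 ∨ ν B = 1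

/-- `v ∈ ∂F_m(u)`, where `F_m(w) = TV_m(w)` for `w ∈ L² ∩ BV_m` and `+∞` otherwise.
This unfolds the subdifferential inequality: it forces `F_m(u) < ∞` and the inequality
is trivial for test functions `w` with `F_m(w) = ∞`. -/
def subdiffFm (m : X → Measure X) (ν : Measure X) (u v : X → ℝ) : Prop :=
  MemLp u 2 ν ∧ MemLp v 2 ν ∧ MemBVm m ν u ∧
    ∀ w : X → ℝ, MemLp w 2 ν → MemBVm m ν w →
      (TVm m ν u).toReal + ∫ x, v x * (w x - u x) ∂ν ≤ (TVm m ν w).toReal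

/-- `(λ, u)` is an `m`-eigenpair of the 1-Laplacian. -/
def IsEigenpair (m : X → Measure X) (ν : Measure X) (lam : ℝ) (u : X → ℝ) : Prop :=
  eLpNorm u 1 ν = 1 ∧
    ∃ ξ : X → ℝ, MemLp ξ ⊤ ν ∧ (∀ᵐ x ∂ν, ξ x ∈ signSet (u x)) ∧
      subdiffFm m ν u fun x => lam * ξ x

/-- The `m`-Cheeger constant of a set `Ω`. -/
def h1m (m : X → Measure X) (ν : Measure X) (Ω : Set X) : ℝ≥0∞ :=
  sInf {r : ℝ≥0∞ | ∃ E : Set X, MeasurableSet E ∧ E ⊆ Ω ∧ 0 < ν E ∧ r = Pm m ν E / ν E}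

/-- `Ω` is `m`-calibrable. -/
def Calibrable (m : X → Measure X) (ν : Measure X) (Ω : Set X) : Prop :=
  h1m m ν Ω = Pm m ν Ω / ν Ω

/-- The `m`-Cheeger constant of the whole space (for a probability measure `ν`). -/
def cheegerConst (m : X → Measure X) (ν : Measure X) : ℝ≥0∞ :=
  sInf {r : ℝ≥0∞ | ∃ D : Set X, MeasurableSet D ∧ 0 < ν D ∧ ν D < 1 ∧
    r = Pm m ν D / min (ν D) (ν Dᶜ)}

/-- The Dirichlet energy functional `H_m(u) = (1/2) ∫∫ (u(x) − u(y))² dm_x(y) dν(x)`. -/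
def Hm (m : X → Measure X) (ν : Measure X) (u : X → ℝ) : ℝ≥0∞ :=
  2⁻¹ * ∫⁻ x, ∫⁻ y, ENNReal.ofReal ((u x - u y) ^ 2) ∂(m x) ∂ν

end

/-!
The exponent `(n - 1) / n` is `1 / p` for `p = n / (n - 1) ∈ [1, ∞]`, so the isoperimetric
inequality reads `‖1_A‖_p ≤ I · P_m(A)`, and the equivalence holds for every `p ≥ 1`.
Since `TV_m(1_A) = P_m(A)`, the Sobolev inequality for `u = 1_A` is the isoperimetric
inequality for `A`. Conversely, passing to `u⁺` and `u⁻` does not increase the total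
variation, and for `v ≥ 0` with superlevel sets `E_t = {v > t}` the coarea formula
`TV_m(v) = ∫ P_m(E_t) dt`, which rests on reversibility, combines with the layer-cake
bound `‖v‖_p ≤ ∫₀^∞ ‖1_{E_t}‖_p dt` (Minkowski's integral inequality). For `t > 0` the set
`E_t` lies, up to a null set, in the set outside which `v` vanishes, so the isoperimetric
inequality applies to it.
-/

open ProbabilityTheory

theorem ENNReal.rpow_le_of_le_mul_rpow_one_sub {a b : ℝ≥0∞} {r : ℝ} (hr : 0 < r) (hb : b ≠ ∞)
    (h : b ≤ a * b ^ (1 - r)) : b ^ r ≤ a := by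
  rcases eq_or_ne b 0 with rfl | hb0
  · simp [ENNReal.zero_rpow_of_pos hr]
  have hbr0 : b ^ (1 - r) ≠ 0 := (ENNReal.rpow_pos (pos_iff_ne_zero.2 hb0) hb).ne'
  refine (ENNReal.mul_le_mul_iff_left hbr0 (ENNReal.rpow_ne_top_of_ne_zero hb0 hb)).1 ?_
  rwa [← ENNReal.rpow_add _ _ hb0 hb, add_sub_cancel, ENNReal.rpow_one]

theorem setLIntegral_Ioi_indicator_Iio (a : ℝ) :
    ∫⁻ t in Ioi 0, (Iio a).indicator 1 t = ENNReal.ofReal a := by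
  rw [lintegral_indicator_one measurableSet_Iio, Measure.restrict_apply measurableSet_Iio,
    Iio_inter_Ioi, Real.volume_Ioo, sub_zero]

theorem ofReal_abs_sub_eq_lintegral_indicator_Ico (a b : ℝ) :
    ENNReal.ofReal |a - b| = ∫⁻ t, (Ico b a).indicator 1 t + (Ico a b).indicator 1 t := by
  rw [lintegral_add_left (measurable_one.indicator measurableSet_Ico),
    lintegral_indicator_one measurableSet_Ico, lintegral_indicator_one measurableSet_Ico,
    Real.volume_Ico, Real.volume_Ico]
  rcases le_total a b with h | h
  · rw [abs_of_nonpos (sub_nonpos.2 h), neg_sub, ENNReal.ofReal_of_nonpos (sub_nonpos.2 h),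
      zero_add]
  · rw [abs_of_nonneg (sub_nonneg.2 h), ENNReal.ofReal_of_nonpos (sub_nonpos.2 h), add_zero]

section LayerCake

variable {X : Type*} [MeasurableSpace X] {ν : Measure X}

theorem lintegral_rpow_eq_setLIntegral_lintegral_indicator [SFinite ν] {w : X → ℝ}
    (hw : Measurable w) {q : ℝ} (hq : 1 ≤ q) :
    ∫⁻ x, ENNReal.ofReal (w x) ^ q ∂ν =
      ∫⁻ t in Ioi 0,
        ∫⁻ x, {x | t < w x}.indicator (fun x => ENNReal.ofReal (w x) ^ (q - 1)) x ∂ν := by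
  have hsplit : ∀ x, ENNReal.ofReal (w x) ^ q =
      ∫⁻ t in Ioi 0, (Iio (w x)).indicator 1 t * ENNReal.ofReal (w x) ^ (q - 1) := by
    intro x
    rw [lintegral_mul_const _ (measurable_one.indicator measurableSet_Iio),
      setLIntegral_Ioi_indicator_Iio]
    conv_lhs => rw [← add_sub_cancel 1 q,
      ENNReal.rpow_add_of_nonneg _ _ zero_le_one (by linarith), ENNReal.rpow_one]
  simp_rw [hsplit]
  rw [lintegral_lintegral_swap]
  · congr with t
    congr with x
    by_cases h : t < w x <;> simp [h]
  · exact ((measurable_one.indicator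
      (measurableSet_lt measurable_snd (hw.comp measurable_fst))).mul
      ((hw.comp measurable_fst).ennreal_ofReal.pow_const _)).aemeasurable

theorem lintegral_indicator_rpow_sub_one_le {f : X → ℝ≥0∞} (hf : AEMeasurable f ν) {E : Set X}
    (hE : MeasurableSet E) {q : ℝ} (hq : 1 < q) :
    ∫⁻ x, E.indicator (fun x => f x ^ (q - 1)) x ∂ν ≤
      ν E ^ (1 / q) * (∫⁻ x, f x ^ q ∂ν) ^ (1 - 1 / q) := by
  have hpq := Real.HolderConjugate.conjExponent hq
  have hind : ∀ x, E.indicator (fun _ => (1 : ℝ≥0∞)) x ^ q = E.indicator 1 x := fun x => by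
    by_cases hx : x ∈ E <;> simp [hx, ENNReal.zero_rpow_of_pos (by linarith : (0:ℝ) < q)]
  calc ∫⁻ x, E.indicator (fun x => f x ^ (q - 1)) x ∂ν
      = ∫⁻ x, ((E.indicator fun _ => 1) * fun x => f x ^ (q - 1) : X → ℝ≥0∞) x ∂ν := by
        congr with x
        by_cases hx : x ∈ E <;> simp [hx]
    _ ≤ _ := ENNReal.lintegral_mul_le_Lp_mul_Lq ν hpq
        (aemeasurable_one.indicator hE) (hf.pow_const (q - 1))
    _ = ν E ^ (1 / q) * (∫⁻ x, f x ^ q ∂ν) ^ (1 - 1 / q) := by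
        simp_rw [hind, ← ENNReal.rpow_mul, hpq.sub_one_mul_conj, lintegral_indicator_one hE,
          one_div, hpq.one_sub_inv]

theorem lintegral_ofReal_rpow_ne_top_of_le {w : X → ℝ} {C : ℝ} (hwC : ∀ x, w x ≤ C)
    (hsupp : ν {x | 0 < w x} ≠ ∞) {q : ℝ} (hq : 0 < q) :
    ∫⁻ x, ENNReal.ofReal (w x) ^ q ∂ν ≠ ∞ := by
  refine ne_top_of_le_ne_top (ENNReal.mul_ne_top
    (ENNReal.rpow_ne_top_of_nonneg hq.le (ENNReal.ofReal_ne_top (r := C))) hsupp)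
    ((lintegral_mono fun x => ?_).trans (lintegral_indicator_const_le _ _))
  by_cases hx : 0 < w x
  · rw [indicator_of_mem (by exact hx)]
    exact ENNReal.rpow_le_rpow (ENNReal.ofReal_le_ofReal (hwC x)) hq.le
  · simp [ENNReal.ofReal_of_nonpos (not_lt.1 hx), ENNReal.zero_rpow_of_pos hq]

theorem eLpNorm_indicator_one_eq_measure_rpow {E : Set X} (hE : MeasurableSet E) {p : ℝ≥0∞}
    (hp : p ≠ 0) (hp_top : p ≠ ∞) :
    eLpNorm (E.indicator fun _ => (1 : ℝ)) p ν = ν E ^ (1 / p.toReal) := by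
  rw [eLpNorm_indicator_const hE hp hp_top, enorm_one, one_mul]

/- With `N = ∫ w^q`, write `w^q = ∫₀^∞ 1_{w > t} w^(q-1) dt` and apply Hölder on each slice:
`N ≤ (∫₀^∞ ν{w > t}^(1/q) dt) * N^(1 - 1/q)`. Boundedness of `w` makes `N` finite, so the
factor `N^(1 - 1/q)` can be cancelled. -/
theorem eLpNorm_le_setLIntegral_eLpNorm_indicator_of_le [SFinite ν] {w : X → ℝ}
    (hw : Measurable w) (hw0 : 0 ≤ w) {C : ℝ} (hwC : ∀ x, w x ≤ C)
    (hsupp : ν {x | 0 < w x} ≠ ∞) {p : ℝ≥0∞} (hp : 1 < p) (hp_top : p ≠ ∞) :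
    eLpNorm w p ν ≤ ∫⁻ t in Ioi 0, eLpNorm ({x | t < w x}.indicator fun _ => (1 : ℝ)) p ν := by
  have hp0 : p ≠ 0 := (zero_lt_one.trans hp).ne'
  have hq : 1 < p.toReal := by
    rwa [← ENNReal.toReal_one, ENNReal.toReal_lt_toReal ENNReal.one_ne_top hp_top]
  have hq0 : 0 < p.toReal := zero_lt_one.trans hq
  rw [eLpNorm_eq_lintegral_rpow_enorm_toReal hp0 hp_top]
  simp_rw [Real.enorm_of_nonneg (hw0 _),
    eLpNorm_indicator_one_eq_measure_rpow (measurableSet_lt measurable_const hw) hp0 hp_top]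
  set N := ∫⁻ x, ENNReal.ofReal (w x) ^ p.toReal ∂ν
  have hN : N ≠ ∞ := lintegral_ofReal_rpow_ne_top_of_le hwC hsupp hq0
  refine ENNReal.rpow_le_of_le_mul_rpow_one_sub (by positivity) hN ?_
  calc N = ∫⁻ t in Ioi 0, ∫⁻ x, {x | t < w x}.indicator
          (fun x => ENNReal.ofReal (w x) ^ (p.toReal - 1)) x ∂ν :=
        lintegral_rpow_eq_setLIntegral_lintegral_indicator hw hq.le
    _ ≤ ∫⁻ t in Ioi 0, ν {x | t < w x} ^ (1 / p.toReal) * N ^ (1 - 1 / p.toReal) :=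
        lintegral_mono fun t => lintegral_indicator_rpow_sub_one_le
          hw.ennreal_ofReal.aemeasurable (measurableSet_lt measurable_const hw) hq
    _ = (∫⁻ t in Ioi 0, ν {x | t < w x} ^ (1 / p.toReal)) * N ^ (1 - 1 / p.toReal) :=
        lintegral_mul_const' _ _ (ENNReal.rpow_ne_top_of_nonneg (by
          rw [sub_nonneg, div_le_one hq0]; exact hq.le) hN)

theorem eLpNorm_top_le_setLIntegral_eLpNorm_indicator {v : X → ℝ} (hv0 : 0 ≤ v) :
    eLpNorm v ∞ ν ≤ ∫⁻ t in Ioi 0, eLpNorm ({x | t < v x}.indicator fun _ => (1 : ℝ)) ∞ ν := by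
  rw [eLpNorm_exponent_top, eLpNormEssSup]
  refine le_of_forall_lt_imp_le_of_dense fun c hc => ?_
  have hc_top : c ≠ ∞ := ne_top_of_lt hc
  rw [← ENNReal.ofReal_toReal hc_top, ← setLIntegral_Ioi_indicator_Iio]
  refine setLIntegral_mono' measurableSet_Ioi fun t ht => ?_
  by_cases htc : t < c.toReal
  · have hlevel : ν {x | t < v x} ≠ 0 := fun h0 => by
      have hae : ∀ᵐ x ∂ν, v x ≤ t := ae_iff.2 (by simpa only [not_le] using h0)
      have hle : essSup (fun x => ‖v x‖ₑ) ν ≤ ENNReal.ofReal t :=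
        essSup_le_of_ae_le _ <| hae.mono fun x hx =>
          (Real.enorm_of_nonneg (hv0 x)).trans_le (ENNReal.ofReal_le_ofReal hx)
      exact (hc.trans_le hle).not_gt
        ((ENNReal.ofReal_lt_iff_lt_toReal (le_of_lt ht) hc_top).2 htc)
    rw [indicator_of_mem (by exact htc), eLpNorm_exponent_top,
      eLpNormEssSup_indicator_const_eq _ _ hlevel, Pi.one_apply, enorm_one]
  · simp [htc]

theorem eLpNorm_one_eq_setLIntegral_eLpNorm_indicator {v : X → ℝ} (hv : Measurable v)
    (hv0 : 0 ≤ v) :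
    eLpNorm v 1 ν = ∫⁻ t in Ioi 0, eLpNorm ({x | t < v x}.indicator fun _ => (1 : ℝ)) 1 ν := by
  simp_rw [eLpNorm_indicator_one_eq_measure_rpow (measurableSet_lt measurable_const hv)
    one_ne_zero ENNReal.one_ne_top, ENNReal.toReal_one, div_one, ENNReal.rpow_one,
    eLpNorm_one_eq_lintegral_enorm, Real.enorm_of_nonneg (hv0 _)]
  exact lintegral_eq_lintegral_meas_lt ν (ae_of_all _ hv0) hv.aemeasurable

theorem eLpNorm_le_setLIntegral_eLpNorm_indicator [SFinite ν] {v : X → ℝ}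
    (hv : Measurable v) (hv0 : 0 ≤ v) (hsupp : ν {x | 0 < v x} ≠ ∞) {p : ℝ≥0∞} (hp : 1 ≤ p) :
    eLpNorm v p ν ≤ ∫⁻ t in Ioi 0, eLpNorm ({x | t < v x}.indicator fun _ => (1 : ℝ)) p ν := by
  rcases hp.eq_or_lt with rfl | hp
  · exact (eLpNorm_one_eq_setLIntegral_eLpNorm_indicator hv hv0).le
  rcases eq_or_ne p ∞ with rfl | hp_top
  · exact eLpNorm_top_le_setLIntegral_eLpNorm_indicator hv0
  set w : ℕ → X → ℝ := fun k x => min (v x) k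
  have hw_le : ∀ k, eLpNorm (w k) p ν ≤
      ∫⁻ t in Ioi 0, eLpNorm ({x | t < v x}.indicator fun _ => (1 : ℝ)) p ν := fun k => by
    have hsupp_k : ν {x | 0 < w k x} ≠ ∞ := ne_top_of_le_ne_top hsupp
      (measure_mono fun x (hx : 0 < min (v x) k) => (lt_min_iff.1 hx).1)
    refine (eLpNorm_le_setLIntegral_eLpNorm_indicator_of_le (hv.min measurable_const)
      (fun x => le_min (hv0 x) k.cast_nonneg) (fun x => min_le_right _ _) hsupp_k hp
      hp_top).trans (lintegral_mono fun t => eLpNorm_mono_real fun x => ?_)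
    rw [norm_indicator_eq_indicator_norm, norm_one]
    exact indicator_le_indicator_of_subset (fun y (hy : t < min (v y) k) => (lt_min_iff.1 hy).1)
      (fun _ => zero_le_one) x
  have hw_lim : ∀ x, Filter.Tendsto (fun k => w k x) Filter.atTop (nhds (v x)) := fun x =>
    tendsto_const_nhds.congr' <| Filter.eventually_atTop.2
      ⟨⌈v x⌉₊, fun k hk => (min_eq_left ((Nat.le_ceil _).trans (Nat.cast_le.2 hk))).symm⟩
  exact (Lp.eLpNorm_lim_le_liminf_eLpNorm
    (fun k => (hv.min measurable_const).aestronglyMeasurable) v (ae_of_all _ hw_lim)).trans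
    (Filter.liminf_le_of_frequently_le' (Filter.Frequently.of_forall hw_le))

end LayerCake

section Coarea

variable {X : Type*} [MeasurableSpace X] {m : X → Measure X} {ν : Measure X}

def MeasurableKernel.toKernel (hker : MeasurableKernel m) : Kernel X X :=
  ⟨m, Measure.measurable_of_measurable_coe m hker⟩

theorem MeasurableKernel.isMarkovKernel_toKernel (hker : MeasurableKernel m)
    (hprob : ∀ x, IsProbabilityMeasure (m x)) : IsMarkovKernel hker.toKernel :=
  ⟨hprob⟩

theorem nlEnergy_eq_lintegral_compProd [SFinite ν] (hprob : ∀ x, IsProbabilityMeasure (m x))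
    (hker : MeasurableKernel m) {u : X → ℝ} (hu : Measurable u) :
    nlEnergy m ν u = ∫⁻ p, ENNReal.ofReal |u p.2 - u p.1| ∂(ν ⊗ₘ hker.toKernel) := by
  have := hker.isMarkovKernel_toKernel hprob
  rw [Measure.lintegral_compProd (by fun_prop)]
  rfl

theorem compProd_toKernel_prod [SFinite ν] (hprob : ∀ x, IsProbabilityMeasure (m x))
    (hker : MeasurableKernel m) {A B : Set X} (hA : MeasurableSet A) (hB : MeasurableSet B) :
    (ν ⊗ₘ hker.toKernel) (A ×ˢ B) = Lm m ν A B := by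
  have := hker.isMarkovKernel_toKernel hprob
  exact Measure.compProd_apply_prod hA hB

theorem lintegral_lintegral_indicator_mul_indicator {A B : Set X} (hA : MeasurableSet A)
    (hB : MeasurableSet B) :
    ∫⁻ x, ∫⁻ y, A.indicator 1 x * B.indicator 1 y ∂(m x) ∂ν = Lm m ν A B := by
  have hinner : ∀ x, ∫⁻ y, A.indicator 1 x * B.indicator 1 y ∂(m x) =
      A.indicator (fun x => m x B) x := fun x => by
    by_cases hx : x ∈ A <;> simp [hx, lintegral_indicator_one hB]
  simp_rw [hinner, lintegral_indicator hA, Lm]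

theorem Lm_comm (hrev : Reversible m ν) {A B : Set X} (hA : MeasurableSet A)
    (hB : MeasurableSet B) : Lm m ν A B = Lm m ν B A := by
  have h := hrev (fun x y => A.indicator 1 x * B.indicator 1 y)
    ((measurable_one.indicator hA).comp measurable_fst |>.mul
      ((measurable_one.indicator hB).comp measurable_snd))
  rw [lintegral_lintegral_indicator_mul_indicator hA hB] at h
  simp_rw [mul_comm (A.indicator 1 _)] at h
  rwa [lintegral_lintegral_indicator_mul_indicator hB hA] at h

theorem Lm_compl_eq_Pm (hrev : Reversible m ν) {E : Set X} (hE : MeasurableSet E) :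
    Lm m ν Eᶜ E = Pm m ν E :=
  Lm_comm hrev hE.compl hE

theorem TVm_eq_lintegral_Pm [SFinite ν] (hprob : ∀ x, IsProbabilityMeasure (m x))
    (hker : MeasurableKernel m) (hrev : Reversible m ν) {v : X → ℝ} (hv : Measurable v) :
    TVm m ν v = ∫⁻ t, Pm m ν {x | t < v x} := by
  have := hker.isMarkovKernel_toKernel hprob
  have hlevel : ∀ t, MeasurableSet {x | t < v x} := fun t => measurableSet_lt measurable_const hv
  have hIco : ∀ {f g : X × X → X}, Measurable f → Measurable g →
      MeasurableSet {q : (X × X) × ℝ | q.2 ∈ Ico (v (f q.1)) (v (g q.1))} := fun hf hg =>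
    (measurableSet_le (hv.comp (hf.comp measurable_fst)) measurable_snd).inter
      (measurableSet_lt measurable_snd (hv.comp (hg.comp measurable_fst)))
  have hleave : ∀ t, ∫⁻ p, (Ico (v p.2) (v p.1)).indicator 1 t ∂(ν ⊗ₘ hker.toKernel) =
      Pm m ν {x | t < v x} := fun t => by
    rw [Pm, ← compProd_toKernel_prod hprob hker (hlevel t) (hlevel t).compl,
      ← lintegral_indicator_one ((hlevel t).prod (hlevel t).compl)]
    congr with p
    simp [indicator_apply, and_comm]
  have henter : ∀ t, ∫⁻ p, (Ico (v p.1) (v p.2)).indicator 1 t ∂(ν ⊗ₘ hker.toKernel) =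
      Pm m ν {x | t < v x} := fun t => by
    rw [← Lm_compl_eq_Pm hrev (hlevel t),
      ← compProd_toKernel_prod hprob hker (hlevel t).compl (hlevel t),
      ← lintegral_indicator_one ((hlevel t).compl.prod (hlevel t))]
    congr with p
    simp [indicator_apply]
  have henergy : nlEnergy m ν v = ∫⁻ t, 2 * Pm m ν {x | t < v x} := by
    simp_rw [nlEnergy_eq_lintegral_compProd hprob hker hv,
      ofReal_abs_sub_eq_lintegral_indicator_Ico]
    rw [lintegral_lintegral_swap
      ((measurable_one.indicator (hIco measurable_fst measurable_snd)).add
        (measurable_one.indicator (hIco measurable_snd measurable_fst))).aemeasurable]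
    congr with t
    rw [lintegral_add_left (f := fun p : X × X => (Ico (v p.1) (v p.2)).indicator 1 t)
      (measurable_one.indicator ((measurableSet_le (hv.comp measurable_fst) measurable_const).inter
        (measurableSet_lt measurable_const (hv.comp measurable_snd)))), henter, hleave, two_mul]
  rw [TVm, henergy, lintegral_const_mul' _ _ ENNReal.ofNat_ne_top, ← mul_assoc,
    ENNReal.inv_mul_cancel two_ne_zero ENNReal.ofNat_ne_top, one_mul]

end Coarea

section Sobolev

variable {X : Type*} [MeasurableSpace X] {m : X → Measure X} {ν : Measure X}

theorem TVm_posPart_add_TVm_negPart_le (u : X → ℝ) :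
    TVm m ν (fun x => max (u x) 0) + TVm m ν (fun x => max (-u x) 0) ≤ TVm m ν u := by
  rw [TVm, TVm, TVm, ← mul_add, nlEnergy, nlEnergy, nlEnergy]
  gcongr
  refine (le_lintegral_add _ _).trans (lintegral_mono fun x => ?_)
  refine (le_lintegral_add _ _).trans (lintegral_mono fun y => ?_)
  rw [← ENNReal.ofReal_add (abs_nonneg _) (abs_nonneg _)]
  exact ENNReal.ofReal_le_ofReal (by grind)

theorem Pm_univ : Pm m ν univ = 0 := by
  simp [Pm, Lm]

theorem Pm_empty : Pm m ν ∅ = 0 := by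
  simp [Pm, Lm]

theorem TVm_indicator_one [SFinite ν] (hprob : ∀ x, IsProbabilityMeasure (m x))
    (hker : MeasurableKernel m) (hrev : Reversible m ν) {A : Set X} (hA : MeasurableSet A) :
    TVm m ν (A.indicator fun _ => 1) = Pm m ν A := by
  have hlevel : ∀ t, Pm m ν {x | t < A.indicator (fun _ => (1 : ℝ)) x} =
      (Ico 0 1).indicator (fun _ => Pm m ν A) t := fun t => by
    rcases lt_or_ge t 0 with ht0 | ht0
    · rw [indicator_of_notMem (fun h => ht0.not_ge h.1), ← Pm_univ (m := m) (ν := ν)]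
      congr 1; ext x
      by_cases hx : x ∈ A <;> simp [hx, ht0, ht0.trans zero_lt_one]
    rcases lt_or_ge t 1 with ht1 | ht1
    · rw [indicator_of_mem (show t ∈ Ico 0 1 from ⟨ht0, ht1⟩)]
      congr 1; ext x
      by_cases hx : x ∈ A <;> simp [hx, ht1, ht0]
    · rw [indicator_of_notMem (fun h => ht1.not_gt h.2), ← Pm_empty (m := m) (ν := ν)]
      congr 1; ext x
      by_cases hx : x ∈ A <;> simp [hx, ht1.not_gt, ht0.not_gt]
  rw [TVm_eq_lintegral_Pm hprob hker hrev (measurable_const.indicator hA)]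
  simp_rw [hlevel]
  rw [lintegral_indicator_const measurableSet_Ico, Real.volume_Ico, sub_zero, ENNReal.ofReal_one,
    mul_one]

theorem measure_superlevel_le {v : X → ℝ} {A : Set X} (hvA : ∀ᵐ x ∂ν, x ∉ A → v x = 0) {t : ℝ}
    (ht : 0 ≤ t) : ν {x | t < v x} ≤ ν A :=
  measure_mono_ae <| hvA.mono fun x hx (hxt : t < v x) => by_contra fun hxA =>
    ht.not_gt (hx hxA ▸ hxt)

theorem eLpNorm_le_mul_TVm_of_nonneg [SFinite ν] (hprob : ∀ x, IsProbabilityMeasure (m x))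
    (hker : MeasurableKernel m) (hrev : Reversible m ν) {p : ℝ≥0∞} (hp : 1 ≤ p) {C : ℝ≥0∞}
    (hC : C ≠ ∞) (hiso : ∀ E : Set X, MeasurableSet E → 0 < ν E → ν E < ν univ →
      eLpNorm (E.indicator fun _ => (1 : ℝ)) p ν ≤ C * Pm m ν E)
    {v : X → ℝ} (hv : Measurable v) (hv0 : 0 ≤ v) {A : Set X} (hA : ν A < ν univ)
    (hvA : ∀ᵐ x ∂ν, x ∉ A → v x = 0) :
    eLpNorm v p ν ≤ C * TVm m ν v := by
  calc eLpNorm v p ν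
      ≤ ∫⁻ t in Ioi 0, eLpNorm ({x | t < v x}.indicator fun _ => (1 : ℝ)) p ν :=
        eLpNorm_le_setLIntegral_eLpNorm_indicator hv hv0
          (measure_superlevel_le hvA le_rfl |>.trans_lt (hA.trans_le le_top)).ne hp
    _ ≤ ∫⁻ t in Ioi 0, C * Pm m ν {x | t < v x} := by
        refine setLIntegral_mono' measurableSet_Ioi fun t ht => ?_
        rcases eq_or_ne (ν {x | t < v x}) 0 with h0 | h0
        · rw [eLpNorm_congr_ae (indicator_meas_zero h0), eLpNorm_zero]
          exact zero_le
        · exact hiso _ (measurableSet_lt measurable_const hv) (pos_iff_ne_zero.2 h0)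
            ((measure_superlevel_le hvA (le_of_lt ht)).trans_lt hA)
    _ ≤ ∫⁻ t, C * Pm m ν {x | t < v x} := setLIntegral_le_lintegral _ _
    _ = C * TVm m ν v := by
        rw [lintegral_const_mul' _ _ hC, TVm_eq_lintegral_Pm hprob hker hrev hv]

theorem eLpNorm_le_mul_TVm_of_isoperimetric [SFinite ν]
    (hprob : ∀ x, IsProbabilityMeasure (m x)) (hker : MeasurableKernel m)
    (hrev : Reversible m ν) {p : ℝ≥0∞} (hp : 1 ≤ p) {C : ℝ≥0∞} (hC : C ≠ ∞)
    (hiso : ∀ E : Set X, MeasurableSet E → 0 < ν E → ν E < ν univ →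
      eLpNorm (E.indicator fun _ => (1 : ℝ)) p ν ≤ C * Pm m ν E)
    {u : X → ℝ} (hu : MemBVm0 m ν u) : eLpNorm u p ν ≤ C * TVm m ν u := by
  obtain ⟨⟨hum, -⟩, A, -, -, hA, huA⟩ := hu
  have hpart : ∀ v : X → ℝ, Measurable v → 0 ≤ v → (∀ x, u x = 0 → v x = 0) →
      eLpNorm v p ν ≤ C * TVm m ν v := fun v hv hv0 hvu =>
    eLpNorm_le_mul_TVm_of_nonneg hprob hker hrev hp hC hiso hv hv0 hA
      (huA.mono fun x hx hxA => hvu x (hx hxA))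
  calc eLpNorm u p ν
      = eLpNorm ((fun x => max (u x) 0) - fun x => max (-u x) 0) p ν := by
        simp_rw [Pi.sub_def, max_zero_sub_max_neg_zero_eq_self]
    _ ≤ eLpNorm (fun x => max (u x) 0) p ν + eLpNorm (fun x => max (-u x) 0) p ν :=
        eLpNorm_sub_le (hum.max measurable_const).aestronglyMeasurable
          (hum.neg.max measurable_const).aestronglyMeasurable hp
    _ ≤ C * TVm m ν (fun x => max (u x) 0) + C * TVm m ν (fun x => max (-u x) 0) :=
        add_le_add
          (hpart _ (hum.max measurable_const) (fun x => le_max_right _ _) fun x hx => by simp [hx])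
          (hpart _ (hum.neg.max measurable_const) (fun x => le_max_right _ _)
            fun x hx => by simp [hx])
    _ ≤ C * TVm m ν u := by
        rw [← mul_add]
        gcongr
        exact TVm_posPart_add_TVm_negPart_le u

theorem isoperimetric_of_eLpNorm_le_mul_TVm [SFinite ν]
    (hprob : ∀ x, IsProbabilityMeasure (m x)) (hker : MeasurableKernel m)
    (hrev : Reversible m ν) {p : ℝ≥0∞} {C : ℝ≥0∞} (hC : C ≠ 0)
    (hsob : ∀ u : X → ℝ, MemBVm0 m ν u → eLpNorm u p ν ≤ C * TVm m ν u)
    {A : Set X} (hA : MeasurableSet A) (hA0 : 0 < ν A) (hAX : ν A < ν univ) :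
    eLpNorm (A.indicator fun _ => (1 : ℝ)) p ν ≤ C * Pm m ν A := by
  rcases eq_or_ne (Pm m ν A) ∞ with htop | htop
  · rw [htop, ENNReal.mul_top hC]
    exact le_top
  have hTV := TVm_indicator_one hprob hker hrev hA
  rw [← hTV]
  refine hsob _ ⟨⟨measurable_const.indicator hA, ?_⟩, A, hA, hA0, hAX,
    ae_of_all _ fun x hx => indicator_of_notMem hx _⟩
  rw [show nlEnergy m ν (A.indicator fun _ => 1) = 2 * TVm m ν (A.indicator fun _ => 1) by
    rw [TVm, ← mul_assoc, ENNReal.mul_inv_cancel two_ne_zero ENNReal.ofNat_ne_top, one_mul], hTV]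
  exact ENNReal.mul_lt_top ENNReal.ofNat_lt_top htop.lt_top

theorem isoperimetric_iff_sobolev_of_one_le [SFinite ν] (hprob : ∀ x, IsProbabilityMeasure (m x))
    (hker : MeasurableKernel m) (hrev : Reversible m ν) {p : ℝ≥0∞} (hp : 1 ≤ p) {C : ℝ≥0∞}
    (hC0 : C ≠ 0) (hC : C ≠ ∞) :
    (∀ A : Set X, MeasurableSet A → 0 < ν A → ν A < ν univ →
        eLpNorm (A.indicator fun _ => (1 : ℝ)) p ν ≤ C * Pm m ν A) ↔
      ∀ u : X → ℝ, MemBVm0 m ν u → eLpNorm u p ν ≤ C * TVm m ν u :=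
  ⟨fun hiso _ hu => eLpNorm_le_mul_TVm_of_isoperimetric hprob hker hrev hp hC hiso hu,
    fun hsob _ hA hA0 hAX =>
      isoperimetric_of_eLpNorm_le_mul_TVm hprob hker hrev hC0 hsob hA hA0 hAX⟩

end Sobolev

theorem ENNReal.one_le_natCast_div_natCast_sub_one {n : ℕ} (hn : 1 ≤ n) :
    1 ≤ (n : ℝ≥0∞) / ((n : ℝ≥0∞) - 1) := by
  rw [ENNReal.le_div_iff_mul_le (Or.inr (by exact_mod_cast (Nat.one_le_iff_ne_zero.1 hn)))
    (Or.inr (natCast_ne_top n)), one_mul]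
  exact tsub_le_self

theorem ENNReal.one_div_toReal_natCast_div_natCast_sub_one (n : ℕ) :
    1 / ((n : ℝ≥0∞) / ((n : ℝ≥0∞) - 1)).toReal = ((n : ℝ) - 1) / n := by
  rcases Nat.eq_zero_or_pos n with rfl | hn
  · simp
  rw [ENNReal.toReal_div, ENNReal.toReal_natCast,
    ENNReal.toReal_sub_of_le (by exact_mod_cast hn) (natCast_ne_top n), toReal_one,
    ENNReal.toReal_natCast, one_div_div]

theorem isoperimetric_iff_sobolev_general
    {X : Type*} [MeasurableSpace X]
    (m : X → Measure X) (hprob : ∀ x, IsProbabilityMeasure (m x))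
    (hker : MeasurableKernel m)
    (ν : Measure X) [SigmaFinite ν] (hrev : Reversible m ν)
    (n : ℕ) (hn : 1 ≤ n) (I : ℝ) (hI : 0 < I) :
    (∀ A : Set X, MeasurableSet A → 0 < ν A → ν A < ν Set.univ →
        ν A ^ (((n : ℝ) - 1) / n) ≤ ENNReal.ofReal I * Pm m ν A) ↔
      (∀ u : X → ℝ, MemBVm0 m ν u →
        eLpNorm u ((n : ℝ≥0∞) / ((n : ℝ≥0∞) - 1)) ν ≤ ENNReal.ofReal I * TVm m ν u) := by
  have hp := ENNReal.one_le_natCast_div_natCast_sub_one hn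
  rw [← isoperimetric_iff_sobolev_of_one_le hprob hker hrev hp (ENNReal.ofReal_pos.2 hI).ne'
    ENNReal.ofReal_ne_top]
  refine forall₂_congr fun A hA => forall_congr' fun hA0 => ?_
  rw [eLpNorm_indicator_const' hA hA0.ne' (zero_lt_one.trans_le hp).ne', enorm_one, one_mul,
    ENNReal.one_div_toReal_natCast_div_natCast_sub_one n]

/-- `[X,d,m,ν]` has isoperimetric dimension `n` (with constant `I`) if and only if the
Sobolev inequality `‖u‖_{L^{n/(n−1)}(X,ν)} ≤ I · TV_m(u)` holds for all `u ∈ BV_m^0(X,ν)`.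
For `n = 1` the exponent `(n−1)/n` is `0` and `n/(n−1) = ∞` (in `ℝ≥0∞`). -/
theorem isoperimetric_iff_sobolev
    {X : Type*} [MetricSpace X] [PolishSpace X] [MeasurableSpace X] [BorelSpace X]
    (m : X → Measure X) (hprob : ∀ x, IsProbabilityMeasure (m x))
    (hker : MeasurableKernel m)
    (ν : Measure X) [SigmaFinite ν] (hrev : Reversible m ν)
    (n : ℕ) (hn : 1 ≤ n) (I : ℝ) (hI : 0 < I) :
    (∀ A : Set X, MeasurableSet A → 0 < ν A → ν A < ν Set.univ →
        ν A ^ (((n : ℝ) - 1) / n) ≤ ENNReal.ofReal I * Pm m ν A) ↔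
      (∀ u : X → ℝ, MemBVm0 m ν u →
        eLpNorm u ((n : ℝ≥0∞) / ((n : ℝ≥0∞) - 1)) ν ≤ ENNReal.ofReal I * TVm m ν u) :=
  isoperimetric_iff_sobolev_general m hprob hker ν hrev n hn I hI
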